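/- arXiv:1802.04148 — 2 statements merged into one kernel-verified Lean document; each statement's English description precedes it below -/
import Mathlib

section
/- Let K be the attractor of a G-symmetric P-polygonal system where P is a regular n-gon with center O and G contains the rotation group of P. If γ is the unique arc in the dendrite K joining O to a vertex A of P, and f is the rotation by 2π/n about O, then the main tree γ̂ (the union of all arcs in K joining pairs of vertices of P) equals ⋃_{k=1}^{n} f^k(γ), and O is a point of order n in γ̂. -/
open Complex Real unitInterval

/-- `A` is an arc from `a` to `b`. -/
def IsArc {X : Type*} [TopologicalSpace X] (A : Set X) (a b : X) : Prop :=
  ∃ φ : I → X, Continuous φ ∧ Function.Injective φ ∧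
    Set.range φ = A ∧ φ 0 = a ∧ φ 1 = b

/-!
The rotation `f` commutes with the system up to relabelling, so the union of the images
`f^[k] '' K` is covered by its own images under the contractions and hence lies in the attractor:
`f` maps `K` into itself, and it permutes the arcs `Γ a` from `O` to the vertices cyclically,
`f^[j] '' Γ a = Γ (a + j)`.

If `Γ a` and `Γ b` shared a point `w ≠ O`, then `w` and `g w` (for `g = f^[b - a]`) would both lie
on the arc `Γ b`, so the arcs from `O` to `w` and to `g w` are nested. As `g` has finite order,
iterating that inclusion forces the two arcs to coincide, making `w` a fixed point of `g` other
than `O`. So the `Γ a` meet only at `O`; the arc between two vertices is then `Γ a ∪ Γ b`, the main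
tree is the star `⋃ a, Γ a`, and removing `O` leaves the `n` separated pieces `Γ a \ {O}`.
-/

open Set Function

lemma Monotone.isFixedPt_of_isPeriodicPt {α : Type*} [PartialOrder α] {F : α → α}
    (hF : Monotone F) {n : ℕ} {x : α} (hx : IsPeriodicPt F n x) (hn : n ≠ 0)
    (hcomp : x ≤ F x ∨ F x ≤ x) : IsFixedPt F x := by
  have hn1 : 1 ≤ n := Nat.one_le_iff_ne_zero.2 hn
  rcases hcomp with h | h
  · have := hF.monotone_iterate_of_le_map h hn1
    simp only [iterate_one, hx.eq] at this
    exact le_antisymm this h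
  · have := hF.antitone_iterate_of_map_le h hn1
    simp only [iterate_one, hx.eq] at this
    exact le_antisymm h this

lemma Path.injective_trans {X : Type*} [TopologicalSpace X] {x y z : X} {p : Path x y}
    {q : Path y z} (hp : Injective p) (hq : Injective q) (hpq : range p ∩ range q ⊆ {y}) :
    Injective (p.trans q) := by
  have cross : ∀ s t : I, (s : ℝ) ≤ 1 / 2 → ¬(t : ℝ) ≤ 1 / 2 → p.trans q s ≠ p.trans q t := by
    intro s t hs ht hst
    rw [Path.trans_apply, Path.trans_apply, dif_pos hs, dif_neg ht] at hst
    have hy : q _ = y := hpq ⟨hst ▸ mem_range_self (f := p) _, mem_range_self _⟩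
    have := congrArg Subtype.val (hq (hy.trans q.source.symm))
    simp only [Set.Icc.coe_zero] at this
    exact ht (by linarith)
  intro s t hst
  by_cases hs : (s : ℝ) ≤ 1 / 2 <;> by_cases ht : (t : ℝ) ≤ 1 / 2
  · rw [Path.trans_apply, Path.trans_apply, dif_pos hs, dif_pos ht] at hst
    have := congrArg Subtype.val (hp hst)
    exact Subtype.ext (by simpa using this)
  · exact absurd hst (cross s t hs ht)
  · exact absurd hst.symm (cross t s ht hs)
  · rw [Path.trans_apply, Path.trans_apply, dif_neg hs, dif_neg ht] at hst
    have := congrArg Subtype.val (hq hst)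
    exact Subtype.ext (by simpa using this)

namespace IsArc

variable {X : Type*} [TopologicalSpace X] {A B : Set X} {a b c : X}

lemma symm (h : IsArc A a b) : IsArc A b a := by
  obtain ⟨φ, hφ, hinj, rfl, rfl, rfl⟩ := h
  refine ⟨φ ∘ σ, hφ.comp continuous_symm, hinj.comp symm_bijective.injective, ?_, ?_, ?_⟩
  · rw [range_comp, symm_bijective.surjective.range_eq, image_univ]
  · simp
  · simp

lemma left_mem (h : IsArc A a b) : a ∈ A := by
  obtain ⟨φ, -, -, rfl, rfl, -⟩ := h
  exact mem_range_self 0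

lemma right_mem (h : IsArc A a b) : b ∈ A :=
  h.symm.left_mem

lemma isCompact (h : IsArc A a b) : IsCompact A := by
  obtain ⟨φ, hφ, -, rfl, -⟩ := h
  exact isCompact_range hφ

lemma isPreconnected_diff_left (h : IsArc A a b) : IsPreconnected (A \ {a}) := by
  obtain ⟨φ, hφ, hinj, rfl, rfl, -⟩ := h
  have : range φ \ {φ 0} = φ '' Ioi 0 := by
    rw [← image_univ, ← image_singleton, ← image_sdiff hinj]
    congr 1
    ext t
    simp [pos_iff_ne_zero]
  rw [this]
  exact isPreconnected_Ioi.image φ hφ.continuousOn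

lemma union (hA : IsArc A a b) (hB : IsArc B b c) (hAB : A ∩ B ⊆ {b}) :
    IsArc (A ∪ B) a c := by
  obtain ⟨φ, hφ, hφinj, rfl, rfl, rfl⟩ := hA
  obtain ⟨ψ, hψ, hψinj, rfl, hψ0, rfl⟩ := hB
  let p : Path (φ 0) (φ 1) := ⟨⟨φ, hφ⟩, rfl, rfl⟩
  let q : Path (φ 1) (ψ 1) := ⟨⟨ψ, hψ⟩, hψ0, rfl⟩
  exact ⟨p.trans q, (p.trans q).continuous, Path.injective_trans hφinj hψinj hAB,
    Path.trans_range p q, (p.trans q).source, (p.trans q).target⟩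

end IsArc

lemma isArc_image_Iic {X : Type*} [TopologicalSpace X] {φ : I → X} (hφ : Continuous φ)
    (hinj : Injective φ) {t : I} (ht : t ≠ 0) : IsArc (φ '' Iic t) (φ 0) (φ t) := by
  have ht' : (0 : ℝ) < t := unitInterval.pos_iff_ne_zero.mpr ht
  have hτ : Injective (t * · : I → I) := fun s₁ s₂ h =>
    Subtype.ext (mul_left_cancel₀ ht'.ne' (congrArg Subtype.val h))
  have hrange : range (t * · : I → I) = Iic t := by
    refine Subset.antisymm (range_subset_iff.2 fun s =>
      show (t : ℝ) * s ≤ t from mul_le_of_le_one_right ht'.le s.2.2) ?_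
    intro u (hu : (u : ℝ) ≤ t)
    refine ⟨⟨u / t, div_nonneg u.2.1 ht'.le, (div_le_one ht').2 hu⟩, Subtype.ext ?_⟩
    exact mul_div_cancel₀ (u : ℝ) ht'.ne'
  refine ⟨φ ∘ (t * ·), hφ.comp (continuous_const.mul continuous_id), hinj.comp hτ, ?_, ?_, ?_⟩
  · rw [range_comp, hrange]
  · simp
  · simp

structure UniqueArcs {X : Type*} [TopologicalSpace X] (K : Set X) (arc : X → X → Set X) :
    Prop where
  isArc_subset : ∀ a b, a ∈ K → b ∈ K → a ≠ b → IsArc (arc a b) a b ∧ arc a b ⊆ K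
  eq_arc : ∀ a b A, a ∈ K → b ∈ K → a ≠ b → IsArc A a b → A ⊆ K → A = arc a b
  arc_self : ∀ a, arc a a = {a}

namespace UniqueArcs

variable {X : Type*} [TopologicalSpace X] {K : Set X} {arc : X → X → Set X} {a b : X}

lemma left_mem (H : UniqueArcs K arc) (ha : a ∈ K) (hb : b ∈ K) : a ∈ arc a b := by
  rcases eq_or_ne a b with rfl | hab
  · simp [H.arc_self]
  · exact (H.isArc_subset a b ha hb hab).1.left_mem

lemma right_mem (H : UniqueArcs K arc) (ha : a ∈ K) (hb : b ∈ K) : b ∈ arc a b := by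
  rcases eq_or_ne a b with rfl | hab
  · simp [H.arc_self]
  · exact (H.isArc_subset a b ha hb hab).1.right_mem

lemma arc_subset (H : UniqueArcs K arc) (ha : a ∈ K) (hb : b ∈ K) : arc a b ⊆ K := by
  rcases eq_or_ne a b with rfl | hab
  · simpa [H.arc_self] using ha
  · exact (H.isArc_subset a b ha hb hab).2

lemma isCompact (H : UniqueArcs K arc) (ha : a ∈ K) (hb : b ∈ K) : IsCompact (arc a b) := by
  rcases eq_or_ne a b with rfl | hab
  · simp [H.arc_self]
  · exact (H.isArc_subset a b ha hb hab).1.isCompact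

lemma arc_eq_image_Iic (H : UniqueArcs K arc) (ha : a ∈ K) (hb : b ∈ K) {φ : I → X}
    (hφ : Continuous φ) (hinj : Injective φ) (hrange : range φ = arc a b) (h0 : φ 0 = a)
    (t : I) : arc a (φ t) = φ '' Iic t := by
  rcases eq_or_ne t 0 with rfl | ht
  · have : Iic (0 : I) = {0} := Iic_bot
    rw [this, image_singleton, h0, H.arc_self]
  have hsub : range φ ⊆ K := hrange ▸ H.arc_subset ha hb
  have hne : a ≠ φ t := h0 ▸ hinj.ne ht.symm
  exact (H.eq_arc a (φ t) _ ha (hsub (mem_range_self t)) hne (h0 ▸ isArc_image_Iic hφ hinj ht)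
    ((image_subset_range φ _).trans hsub)).symm

lemma arc_subset_or_subset (H : UniqueArcs K arc) (ha : a ∈ K) (hb : b ∈ K) {x y : X}
    (hx : x ∈ arc a b) (hy : y ∈ arc a b) : arc a x ⊆ arc a y ∨ arc a y ⊆ arc a x := by
  rcases eq_or_ne a b with rfl | hab
  · rw [H.arc_self, mem_singleton_iff] at hx hy
    simp [hx, hy]
  obtain ⟨⟨φ, hφ, hinj, hrange, h0, -⟩, -⟩ := H.isArc_subset a b ha hb hab
  obtain ⟨s, rfl⟩ := hrange ▸ hx
  obtain ⟨t, rfl⟩ := hrange ▸ hy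
  simp only [H.arc_eq_image_Iic ha hb hφ hinj hrange h0]
  exact (le_total s t).imp (fun h => image_mono (Iic_subset_Iic.2 h))
    (fun h => image_mono (Iic_subset_Iic.2 h))

lemma eq_of_arc_eq (H : UniqueArcs K arc) (ha : a ∈ K) (hb : b ∈ K) {y : X} (hy : y ∈ K)
    (h : arc a y = arc a b) : y = b := by
  have hyab : y ∈ arc a b := h ▸ H.right_mem ha hy
  rcases eq_or_ne a b with rfl | hab
  · rwa [H.arc_self] at hyab
  obtain ⟨⟨φ, hφ, hinj, hrange, h0, h1⟩, -⟩ := H.isArc_subset a b ha hb hab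
  obtain ⟨t, rfl⟩ := hrange ▸ hyab
  have : φ 1 ∈ φ '' Iic t := by
    rw [← H.arc_eq_image_Iic ha hb hφ hinj hrange h0, h, ← hrange]
    exact mem_range_self 1
  rw [hinj.mem_set_image] at this
  rw [← h1, le_antisymm le_one' this]

lemma image_arc (H : UniqueArcs K arc) {g : X → X} (hg : Continuous g) (hginj : Injective g)
    (hgK : MapsTo g K K) (ha : a ∈ K) (hb : b ∈ K) : g '' arc a b = arc (g a) (g b) := by
  rcases eq_or_ne a b with rfl | hab
  · simp [H.arc_self]
  obtain ⟨⟨φ, hφ, hinj, hrange, h0, h1⟩, hsub⟩ := H.isArc_subset a b ha hb hab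
  refine H.eq_arc _ _ _ (hgK ha) (hgK hb) (hginj.ne hab) ⟨g ∘ φ, hg.comp hφ, hginj.comp hinj,
    by rw [range_comp, hrange], by simp [h0], by simp [h1]⟩ ?_
  exact image_subset_iff.2 (hsub.trans hgK)

lemma arc_inter_arc_image (H : UniqueArcs K arc) {g : X → X} (hg : Continuous g)
    (hginj : Injective g) (hgK : MapsTo g K K) {n : ℕ} (hn : n ≠ 0) (hgn : g^[n] = id)
    {o p : X} (ho : o ∈ K) (hp : p ∈ K) (hgo : g o = o) (hfix : ∀ x ∈ K, g x = x → x = o) :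
    arc o p ∩ arc o (g p) = {o} := by
  have himage : ∀ x ∈ K, g '' arc o x = arc o (g x) := fun x hx => by
    rw [H.image_arc hg hginj hgK ho hx, hgo]
  refine Subset.antisymm (fun w ⟨hwp, hwgp⟩ => ?_)
    (singleton_subset_iff.2 ⟨H.left_mem ho hp, H.left_mem ho (hgK hp)⟩)
  have hw : w ∈ K := H.arc_subset ho hp hwp
  have hgw : g w ∈ arc o (g p) := himage p hp ▸ mem_image_of_mem g hwp
  have hperiodic : IsPeriodicPt (image g) n (arc o w) := by
    rw [IsPeriodicPt, IsFixedPt, ← image_iterate_eq, hgn, image_id]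
  have hfixed := (monotone_image (f := g)).isFixedPt_of_isPeriodicPt hperiodic hn
    (himage w hw ▸ H.arc_subset_or_subset ho (hgK hp) hwgp hgw)
  exact hfix w hw (H.eq_of_arc_eq ho hw (hgK hw) (himage w hw ▸ hfixed))

lemma arc_eq_union (H : UniqueArcs K arc) {o p q : X} (ho : o ∈ K) (hp : p ∈ K) (hq : q ∈ K)
    (hpo : p ≠ o) (hqo : q ≠ o) (hpq : arc o p ∩ arc o q = {o}) :
    arc p q = arc o p ∪ arc o q := by
  have hne : p ≠ q := by
    rintro rfl
    exact hpo (hpq.subset ⟨H.right_mem ho hp, H.right_mem ho hp⟩)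
  refine (H.eq_arc p q _ hp hq hne ?_ (union_subset (H.arc_subset ho hp) (H.arc_subset ho hq))).symm
  exact ((H.isArc_subset o p ho hp hpo.symm).1.symm.union (H.isArc_subset o q ho hq hqo.symm).1
    hpq.subset)

lemma iUnion_arc_pairs_eq (H : UniqueArcs K arc) {n : ℕ} (hn : 2 ≤ n) {o : X} {v : Fin n → X}
    (ho : o ∈ K) (hv : ∀ a, v a ∈ K) (hvo : ∀ a, v a ≠ o)
    (hinter : Pairwise fun a b => arc o (v a) ∩ arc o (v b) = {o}) :
    ⋃ (i : Fin n) (j : Fin n) (_ : i < j), arc (v i) (v j) = ⋃ a, arc o (v a) := by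
  have hunion : ∀ a b, a ≠ b → arc (v a) (v b) = arc o (v a) ∪ arc o (v b) := fun a b hab =>
    H.arc_eq_union ho (hv a) (hv b) (hvo a) (hvo b) (hinter hab)
  refine Subset.antisymm (iUnion₂_subset fun i j => iUnion_subset fun hij => ?_)
    (iUnion_subset fun a => ?_)
  · rw [hunion i j hij.ne]
    exact union_subset (subset_iUnion_of_subset i le_rfl) (subset_iUnion_of_subset j le_rfl)
  · have : Nontrivial (Fin n) := Fin.nontrivial_iff_two_le.2 hn
    obtain ⟨b, hba⟩ := exists_ne a
    rcases hba.lt_or_gt with hba | hab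
    · refine subset_iUnion₂_of_subset b a (subset_iUnion_of_subset hba ?_)
      rw [hunion b a hba.ne]
      exact subset_union_right
    · refine subset_iUnion₂_of_subset a b (subset_iUnion_of_subset hab ?_)
      rw [hunion a b hab.ne]
      exact subset_union_left

end UniqueArcs

section Attractor

open Metric Bornology Filter Topology
open scoped NNReal

variable {X ι : Type*} [MetricSpace X]

lemma LipschitzWith.infDist_le_mul_of_mapsTo {S : X → X} {ρ : ℝ≥0} (hS : LipschitzWith ρ S)
    {K : Set X} (hKc : IsCompact K) (hKne : K.Nonempty) (hSK : MapsTo S K K) (y : X) :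
    infDist (S y) K ≤ ρ * infDist y K := by
  obtain ⟨k, hk, hyk⟩ := hKc.exists_infDist_eq_dist hKne y
  calc infDist (S y) K ≤ dist (S y) (S k) := infDist_le_dist_of_mem (hSK hk)
    _ ≤ ρ * dist y k := hS.dist_le_mul y k
    _ = ρ * infDist y K := by rw [hyk]

theorem subset_of_subset_iUnion_image [Finite ι] {S : ι → X → X} {ρ : ι → ℝ≥0}
    (hS : ∀ i, ContractingWith (ρ i) (S i)) {K M : Set X} (hKc : IsCompact K)
    (hKne : K.Nonempty) (hSK : ∀ i, MapsTo (S i) K K) (hM : IsBounded M)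
    (hMS : M ⊆ ⋃ i, S i '' M) : M ⊆ K := by
  have := Fintype.ofFinite ι
  set ρmax := Finset.univ.sup ρ
  have hρ1 : ρmax < 1 := (Finset.sup_lt_iff zero_lt_one).2 fun i _ => (hS i).1
  have hSρ : ∀ i, LipschitzWith ρmax (S i) := fun i =>
    (hS i).2.weaken (Finset.le_sup (Finset.mem_univ i))
  obtain ⟨p, hp⟩ := hKne
  obtain ⟨R, hR⟩ := hM.subset_closedBall p
  have hdecay : ∀ j : ℕ, ∀ x ∈ M, infDist x K ≤ ρmax ^ j * R := by
    intro j
    induction j with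
    | zero => exact fun x hx => by simpa using (infDist_le_dist_of_mem hp).trans (hR hx)
    | succ j ih =>
      intro x hx
      obtain ⟨i, y, hy, rfl⟩ := mem_iUnion.1 (hMS hx)
      calc infDist (S i y) K ≤ ρmax * infDist y K :=
            (hSρ i).infDist_le_mul_of_mapsTo hKc ⟨p, hp⟩ (hSK i) y
        _ ≤ ρmax * (ρmax ^ j * R) := by gcongr; exact ih y hy
        _ = ρmax ^ (j + 1) * R := by ring
  intro x hx
  have hlim : Tendsto (fun j : ℕ => (ρmax : ℝ) ^ j * R) atTop (𝓝 0) := by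
    simpa using (tendsto_pow_atTop_nhds_zero_of_lt_one ρmax.2 hρ1).mul_const R
  refine (hKc.isClosed.mem_iff_infDist_zero ⟨p, hp⟩).2 (le_antisymm ?_ infDist_nonneg)
  exact ge_of_tendsto hlim (Eventually.of_forall fun j => hdecay j x hx)

theorem mapsTo_of_iterate_comp_eq [Finite ι] {S : ι → X → X} {ρ : ι → ℝ≥0}
    (hS : ∀ i, ContractingWith (ρ i) (S i)) {K : Set X} (hKc : IsCompact K)
    (hKne : K.Nonempty) (hK : K = ⋃ i, S i '' K) {f : X → X}
    (hbdd : IsBounded (⋃ k : ℕ, f^[k] '' K))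
    (hsym : ∀ (k : ℕ) (i : ι), ∃ (k' : ℕ) (j : ι), f^[k] ∘ S i = S j ∘ f^[k']) :
    MapsTo f K K := by
  have hSK : ∀ i, MapsTo (S i) K K := fun i x hx => by
    rw [hK]
    exact mem_iUnion.2 ⟨i, mem_image_of_mem _ hx⟩
  have hcover : ⋃ k : ℕ, f^[k] '' K ⊆ ⋃ j, S j '' ⋃ k : ℕ, f^[k] '' K := by
    refine iUnion_subset fun k => image_subset_iff.2 fun x hx => ?_
    rw [hK] at hx
    obtain ⟨i, w, hw, rfl⟩ := mem_iUnion.1 hx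
    obtain ⟨k', j, hcomm⟩ := hsym k i
    exact mem_iUnion.2 ⟨j, f^[k'] w, mem_iUnion.2 ⟨k', mem_image_of_mem _ hw⟩,
      (congrFun hcomm w).symm⟩
  exact fun x hx => subset_of_subset_iUnion_image hS hKc hKne hSK hbdd hcover
    (mem_iUnion.2 ⟨1, x, hx, rfl⟩)

lemma contractingWith_of_dist_eq {S : X → X} {r : ℝ} (hr : r < 1)
    (hS : ∀ x y, dist (S x) (S y) = r * dist x y) : ContractingWith r.toNNReal S :=
  ⟨Real.toNNReal_lt_one.2 hr, LipschitzWith.of_dist_le_mul fun x y =>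
    (hS x y).le.trans (mul_le_mul_of_nonneg_right (Real.le_coe_toNNReal r) dist_nonneg)⟩

end Attractor

section Components

variable {X ι : Type*} [TopologicalSpace X] [Finite ι] {U : ι → Set X}

lemma connectedComponentIn_iUnion_of_separated
    (hsep : Pairwise fun i j => Disjoint (closure (U i)) (U j))
    (hU : ∀ i, IsPreconnected (U i)) {i : ι} {x : X} (hx : x ∈ U i) :
    connectedComponentIn (⋃ j, U j) x = U i := by
  set C := connectedComponentIn (⋃ j, U j) x
  have hCU : C ⊆ ⋃ j, U j := connectedComponentIn_subset _ _
  set W := ⋃ (j) (_ : j ≠ i), closure (U j)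
  have hW : IsClosed W :=
    isClosed_iUnion_of_finite fun j => isClosed_iUnion_of_finite fun _ => isClosed_closure
  have hcover : C ⊆ closure (U i) ∪ W := fun y hy => by
    obtain ⟨k, hk⟩ := mem_iUnion.1 (hCU hy)
    by_cases hki : k = i
    · exact Or.inl (subset_closure (hki ▸ hk))
    · exact Or.inr (mem_iUnion₂.2 ⟨k, hki, subset_closure hk⟩)
  have hdisj : C ∩ (closure (U i) ∩ W) = ∅ := by
    refine eq_empty_of_forall_notMem fun y ⟨hy, hyi, hyW⟩ => ?_
    obtain ⟨k, hk⟩ := mem_iUnion.1 (hCU hy)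
    obtain ⟨j, hji, hyj⟩ := mem_iUnion₂.1 hyW
    rcases eq_or_ne k i with rfl | hki
    · exact (hsep hji).notMem_of_mem_left hyj hk
    · exact (hsep hki.symm).notMem_of_mem_left hyi hk
  have hCi : C ⊆ closure (U i) := by
    refine (isPreconnected_iff_subset_of_disjoint_closed.1 isPreconnected_connectedComponentIn
      _ _ isClosed_closure hW hcover hdisj).resolve_right fun hCW => ?_
    obtain ⟨j, hji, hxj⟩ := mem_iUnion₂.1 (hCW (mem_connectedComponentIn (mem_iUnion.2 ⟨i, hx⟩)))
    exact (hsep hji).notMem_of_mem_left hxj hx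
  refine Subset.antisymm (fun y hy => ?_)
    ((hU i).subset_connectedComponentIn hx (subset_iUnion U i))
  obtain ⟨k, hk⟩ := mem_iUnion.1 (hCU hy)
  rcases eq_or_ne k i with rfl | hki
  · exact hk
  · exact absurd hk ((hsep hki.symm).notMem_of_mem_left (hCi hy))

lemma ncard_connectedComponentIn_iUnion_of_separated
    (hsep : Pairwise fun i j => Disjoint (closure (U i)) (U j))
    (hU : ∀ i, IsPreconnected (U i)) (hne : ∀ i, (U i).Nonempty) :
    {C : Set X | ∃ x ∈ ⋃ i, U i, C = connectedComponentIn (⋃ i, U i) x}.ncard = Nat.card ι := by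
  have hrange : {C : Set X | ∃ x ∈ ⋃ i, U i, C = connectedComponentIn (⋃ i, U i) x} =
      range U := by
    ext C
    constructor
    · rintro ⟨x, hx, rfl⟩
      obtain ⟨i, hi⟩ := mem_iUnion.1 hx
      exact ⟨i, (connectedComponentIn_iUnion_of_separated hsep hU hi).symm⟩
    · rintro ⟨i, rfl⟩
      obtain ⟨x, hx⟩ := hne i
      exact ⟨x, mem_iUnion.2 ⟨i, hx⟩, (connectedComponentIn_iUnion_of_separated hsep hU hx).symm⟩
  have hinj : Injective U := fun i j hij => by
    by_contra hne'
    obtain ⟨x, hx⟩ := hne i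
    exact (hsep hne').notMem_of_mem_left (subset_closure hx) (hij ▸ hx)
  rw [hrange, ← image_univ, ncard_image_of_injective _ hinj, ncard_univ]

end Components

lemma UniqueArcs.ncard_connectedComponentIn_iUnion_arc_diff {X ι : Type*} [TopologicalSpace X]
    [T2Space X] [Finite ι] {K : Set X} {arc : X → X → Set X} (H : UniqueArcs K arc) {o : X}
    {p : ι → X} (ho : o ∈ K) (hp : ∀ i, p i ∈ K) (hpo : ∀ i, p i ≠ o)
    (hinter : Pairwise fun i j => arc o (p i) ∩ arc o (p j) = {o}) :
    {C : Set X | ∃ x ∈ (⋃ i, arc o (p i)) \ {o},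
      C = connectedComponentIn ((⋃ i, arc o (p i)) \ {o}) x}.ncard = Nat.card ι := by
  rw [iUnion_sdiff]
  refine ncard_connectedComponentIn_iUnion_of_separated (fun i j hij => ?_)
    (fun i => (H.isArc_subset o (p i) ho (hp i) (hpo i).symm).1.isPreconnected_diff_left)
    (fun i => ⟨p i, H.right_mem ho (hp i), hpo i⟩)
  have hcl : closure (arc o (p i) \ {o}) ⊆ arc o (p i) :=
    closure_minimal sdiff_subset (H.isCompact ho (hp i)).isClosed
  refine disjoint_left.2 fun x hxi ⟨hxj, hxo⟩ => hxo ?_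
  exact (hinter hij).subset ⟨hcl hxi, hxj⟩

section Rotation

open Metric Bornology

variable {O ζ : ℂ} {g : ℂ → ℂ}

lemma iterate_eq_of_forall_eq_rotation (hg : ∀ z, g z = O + ζ * (z - O)) (k : ℕ) (z : ℂ) :
    g^[k] z = O + ζ ^ k * (z - O) := by
  induction k generalizing z with
  | zero => simp
  | succ k ih => rw [iterate_succ_apply, ih, hg]; ring

lemma isometry_of_forall_eq_rotation (hg : ∀ z, g z = O + ζ * (z - O)) (hζ : ‖ζ‖ = 1) :
    Isometry g :=
  Isometry.of_dist_eq fun x y => by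
    rw [hg, hg, dist_eq_norm, dist_eq_norm, add_sub_add_left_eq_sub, ← mul_sub, norm_mul, hζ,
      one_mul, sub_sub_sub_cancel_right]

lemma isBounded_iUnion_iterate_image_of_rotation (hg : ∀ z, g z = O + ζ * (z - O))
    (hζ : ‖ζ‖ = 1) {s : Set ℂ} (hs : IsBounded s) : IsBounded (⋃ k : ℕ, g^[k] '' s) := by
  obtain ⟨R, hR⟩ := hs.subset_closedBall O
  refine (isBounded_closedBall (x := O) (r := R)).subset
    (iUnion_subset fun k => image_subset_iff.2 fun z hz => ?_)
  have hz' : ‖z - O‖ ≤ R := by simpa [dist_eq_norm] using hR hz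
  simpa [dist_eq_norm, iterate_eq_of_forall_eq_rotation hg, hζ] using hz'

lemma UniqueArcs.arc_inter_arc_rotation {K : Set ℂ} {arc : ℂ → ℂ → Set ℂ}
    (H : UniqueArcs K arc) (hg : ∀ z, g z = O + ζ * (z - O)) {n : ℕ} (hn : n ≠ 0)
    (hζn : ζ ^ n = 1) (hζ1 : ζ ≠ 1) (hgK : MapsTo g K K) (hO : O ∈ K) {p : ℂ} (hp : p ∈ K) :
    arc O p ∩ arc O (g p) = {O} := by
  have hiso := isometry_of_forall_eq_rotation hg (norm_eq_one_of_pow_eq_one hζn hn)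
  refine H.arc_inter_arc_image hiso.continuous hiso.injective hgK hn ?_ hO hp (by simp [hg]) ?_
  · funext z
    simp [iterate_eq_of_forall_eq_rotation hg, hζn]
  · intro x _ hx
    rw [hg] at hx
    have : (ζ - 1) * (x - O) = 0 := by linear_combination hx
    simpa [sub_eq_zero, hζ1] using this

end Rotation

section RegularPolygon

open Fin.NatCast Fin.CommRing

variable {n : ℕ} [NeZero n]

lemma Fin.iUnion_mem_Icc_add {α : Type*} (s : Fin n → Set α) (k₀ : Fin n) :
    ⋃ k ∈ Finset.Icc 1 n, s (k₀ + k) = ⋃ a, s a := by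
  refine Subset.antisymm (iUnion₂_subset fun k _ => subset_iUnion s _) (iUnion_subset fun a => ?_)
  have hk : k₀ + ((((a - k₀ - 1 : Fin n) : ℕ) + 1 : ℕ) : Fin n) = a := by
    push_cast [Fin.cast_val_eq_self]
    ring
  refine subset_iUnion₂_of_subset _ (Finset.mem_Icc.2 ⟨by omega, (a - k₀ - 1).is_lt⟩) ?_
  rw [hk]

variable {O c ω : ℂ} {v : Fin n → ℂ} {f : ℂ → ℂ}

lemma iterate_rotation_vertex (hω : IsPrimitiveRoot ω n)
    (hv : ∀ k : Fin n, v k = O + c * ω ^ (k : ℕ)) (hf : ∀ z, f z = O + ω * (z - O)) (j : ℕ)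
    (a : Fin n) : f^[j] (v a) = v (a + j) := by
  have hmod : ∀ m, ω ^ (m % n) = ω ^ m := fun m => by rw [hω.eq_orderOf, pow_mod_orderOf]
  rw [iterate_eq_of_forall_eq_rotation hf, hv, hv, Fin.val_add, Fin.val_natCast, hmod, pow_add,
    hmod]
  ring

variable {K : Set ℂ} {arc : ℂ → ℂ → Set ℂ}

lemma UniqueArcs.image_iterate_arc_vertex (H : UniqueArcs K arc)
    (hω : IsPrimitiveRoot ω n) (hv : ∀ k : Fin n, v k = O + c * ω ^ (k : ℕ))
    (hf : ∀ z, f z = O + ω * (z - O)) (hfK : MapsTo f K K) (hO : O ∈ K) (hvK : ∀ k, v k ∈ K)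
    (j : ℕ) (a : Fin n) : f^[j] '' arc O (v a) = arc O (v (a + j)) := by
  have hiso := isometry_of_forall_eq_rotation (iterate_eq_of_forall_eq_rotation hf j)
    (by rw [norm_pow, hω.norm'_eq_one (NeZero.ne n), one_pow])
  rw [H.image_arc hiso.continuous hiso.injective (hfK.iterate j) hO (hvK a),
    iterate_rotation_vertex hω hv hf]
  simp [iterate_eq_of_forall_eq_rotation hf]

lemma UniqueArcs.pairwise_arc_inter_arc_eq_center (H : UniqueArcs K arc) (hω : IsPrimitiveRoot ω n)
    (hv : ∀ k : Fin n, v k = O + c * ω ^ (k : ℕ)) (hf : ∀ z, f z = O + ω * (z - O))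
    (hfK : MapsTo f K K) (hO : O ∈ K) (hvK : ∀ k, v k ∈ K) :
    Pairwise fun a b => arc O (v a) ∩ arc O (v b) = {O} := by
  intro a b hab
  set d := ((b - a : Fin n) : ℕ)
  have hd : d ≠ 0 := Fin.val_ne_zero_iff.2 (sub_ne_zero.2 hab.symm)
  have hb : f^[d] (v a) = v b := by
    rw [iterate_rotation_vertex hω hv hf, Fin.cast_val_eq_self, add_sub_cancel]
  rw [← hb]
  refine H.arc_inter_arc_rotation (iterate_eq_of_forall_eq_rotation hf d) (NeZero.ne n) ?_
    (hω.pow_ne_one_of_pos_of_lt hd (b - a).is_lt) (hfK.iterate d) hO (hvK a)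
  rw [← pow_mul, mul_comm, pow_mul, hω.pow_eq_one, one_pow]

lemma UniqueArcs.iUnion_Icc_image_iterate_arc (H : UniqueArcs K arc)
    (hω : IsPrimitiveRoot ω n) (hv : ∀ k : Fin n, v k = O + c * ω ^ (k : ℕ))
    (hf : ∀ z, f z = O + ω * (z - O)) (hfK : MapsTo f K K) (hO : O ∈ K) (hvK : ∀ k, v k ∈ K)
    (k₀ : Fin n) : ⋃ k ∈ Finset.Icc 1 n, f^[k] '' arc O (v k₀) = ⋃ a, arc O (v a) := by
  simp only [H.image_iterate_arc_vertex hω hv hf hfK hO hvK]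
  exact Fin.iUnion_mem_Icc_add (fun a => arc O (v a)) k₀

end RegularPolygon

theorem stmt17_general (n : ℕ) (hn : 3 ≤ n) (O c : ℂ) (hc : c ≠ 0)
    (v : Fin n → ℂ) (hv : ∀ k : Fin n, v k = O + c * Complex.exp (2 * π * Complex.I * k / n))
    (f : ℂ → ℂ) (hf : ∀ z : ℂ, f z = O + Complex.exp (2 * π * Complex.I / n) * (z - O))
    -- the system of contracting similarities
    {m : ℕ} (S : Fin m → ℂ → ℂ) (r : Fin m → ℝ)
    (hr : ∀ i, r i < 1)
    (hS : ∀ i, ∀ x y : ℂ, dist (S i x) (S i y) = r i * dist x y)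
    -- G-symmetry, G ⊇ the rotation group of P generated by f
    (hsym : ∀ (k : ℕ) (i : Fin m), ∃ (k' : ℕ) (j : Fin m),
      f^[k] ∘ S i = S j ∘ f^[k'])
    -- the attractor K
    (K : Set ℂ) (hKc : IsCompact K)
    (hK : K = ⋃ i, S i '' K)
    (hOK : O ∈ K) (hvK : ∀ k : Fin n, v k ∈ K)
    -- K is a dendrite: unique arcwise connectedness, encoded by an arc function
    (arc : ℂ → ℂ → Set ℂ)
    (harc : ∀ a b : ℂ, a ∈ K → b ∈ K → a ≠ b →
      IsArc (arc a b) a b ∧ arc a b ⊆ K)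
    (harc_uniq : ∀ (a b : ℂ) (A : Set ℂ), a ∈ K → b ∈ K → a ≠ b →
      IsArc A a b → A ⊆ K → A = arc a b)
    (harc_refl : ∀ a : ℂ, arc a a = {a})
    -- the arc γ from O to the vertex A = v k₀, and the main tree γ̂
    (k₀ : Fin n) (γ : Set ℂ) (hγ : γ = arc O (v k₀))
    (γhat : Set ℂ)
    (hγhat : γhat = ⋃ (i : Fin n), ⋃ (j : Fin n), ⋃ (_ : i < j), arc (v i) (v j)) :
    γhat = ⋃ k ∈ Finset.Icc 1 n, f^[k] '' γ ∧
      {C : Set ℂ | ∃ x ∈ γhat \ {O}, C = connectedComponentIn (γhat \ {O}) x}.ncard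
        = n := by
  have hn0 : n ≠ 0 := by omega
  have : NeZero n := ⟨hn0⟩
  have hω := Complex.isPrimitiveRoot_exp n hn0
  have hv' : ∀ k : Fin n, v k = O + c * Complex.exp (2 * π * Complex.I / n) ^ (k : ℕ) :=
    fun k => by rw [hv, ← Complex.exp_nat_mul]; ring_nf
  have hvO : ∀ k, v k ≠ O := fun k => by simp [hv', hc, hω.ne_zero hn0]
  have H : UniqueArcs K arc := ⟨harc, harc_uniq, harc_refl⟩
  have hfK : MapsTo f K K :=
    mapsTo_of_iterate_comp_eq (fun i => contractingWith_of_dist_eq (hr i) (hS i)) hKc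
      ⟨O, hOK⟩ hK (isBounded_iUnion_iterate_image_of_rotation hf (hω.norm'_eq_one hn0)
      hKc.isBounded) hsym
  have hinter := H.pairwise_arc_inter_arc_eq_center hω hv' hf hfK hOK hvK
  have htree : γhat = ⋃ a, arc O (v a) :=
    hγhat.trans (H.iUnion_arc_pairs_eq (by omega) hOK hvK hvO hinter)
  refine ⟨?_, ?_⟩
  · rw [htree, hγ, H.iUnion_Icc_image_iterate_arc hω hv' hf hfK hOK hvK]
  · rw [htree, H.ncard_connectedComponentIn_iUnion_arc_diff hOK hvK hvO hinter, Nat.card_fin]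

/-- Let `K` be the attractor (a dendrite) of a `G`-symmetric
`P`-polygonal system, `P` a regular `n`-gon with center `O`, vertices `v k`, and `G`
containing the rotation group of `P` (generated by the rotation `f` by `2π/n`
about `O`). If `γ` is the arc in `K` joining `O` to a vertex `A = v k₀`, then the
main tree `γ̂ = ⋃_{i<j} γ_{v_i v_j}` equals `⋃_{k=1}^n f^k(γ)`, and `O` has order
`n` in `γ̂` (i.e. `γ̂ \ {O}` has exactly `n` connected components). -/
theorem stmt17 (n : ℕ) (hn : 3 ≤ n) (O c : ℂ) (hc : c ≠ 0)
    (v : Fin n → ℂ) (hv : ∀ k : Fin n, v k = O + c * Complex.exp (2 * π * Complex.I * k / n))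
    (P : Set ℂ) (hP : P = convexHull ℝ (Set.range v))
    (f : ℂ → ℂ) (hf : ∀ z : ℂ, f z = O + Complex.exp (2 * π * Complex.I / n) * (z - O))
    -- the system of contracting similarities
    {m : ℕ} (S : Fin m → ℂ → ℂ) (r : Fin m → ℝ)
    (hr : ∀ i, r i < 1) (hr0 : ∀ i, 0 < r i)
    (hS : ∀ i, ∀ x y : ℂ, dist (S i x) (S i y) = r i * dist x y)
    -- (D1)
    (hD1 : ∀ i, S i '' P ⊆ P)
    -- (D2)
    (hD2 : ∀ i j : Fin m, i ≠ j → S i '' P ∩ S j '' P = ∅ ∨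
      ∃ p : ℂ, S i '' P ∩ S j '' P = {p} ∧
        p ∈ S i '' Set.range v ∧ p ∈ S j '' Set.range v)
    -- (D3)
    (hD3 : ∀ k : Fin n, ∃ i : Fin m, ∃ l : Fin n, S i (v l) = v k)
    -- (D4)
    (hD4 : ContractibleSpace ↥(⋃ i, S i '' P))
    -- G-symmetry, G ⊇ the rotation group of P generated by f
    (hsym : ∀ (k : ℕ) (i : Fin m), ∃ (k' : ℕ) (j : Fin m),
      f^[k] ∘ S i = S j ∘ f^[k'])
    -- the attractor K
    (K : Set ℂ) (hKne : K.Nonempty) (hKc : IsCompact K)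
    (hK : K = ⋃ i, S i '' K)
    (hOK : O ∈ K) (hvK : ∀ k : Fin n, v k ∈ K)
    -- K is a dendrite: unique arcwise connectedness, encoded by an arc function
    (arc : ℂ → ℂ → Set ℂ)
    (harc : ∀ a b : ℂ, a ∈ K → b ∈ K → a ≠ b →
      IsArc (arc a b) a b ∧ arc a b ⊆ K)
    (harc_uniq : ∀ (a b : ℂ) (A : Set ℂ), a ∈ K → b ∈ K → a ≠ b →
      IsArc A a b → A ⊆ K → A = arc a b)
    (harc_refl : ∀ a : ℂ, arc a a = {a})
    -- the arc γ from O to the vertex A = v k₀, and the main tree γ̂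
    (k₀ : Fin n) (γ : Set ℂ) (hγ : γ = arc O (v k₀))
    (γhat : Set ℂ)
    (hγhat : γhat = ⋃ (i : Fin n), ⋃ (j : Fin n), ⋃ (_ : i < j), arc (v i) (v j)) :
    γhat = ⋃ k ∈ Finset.Icc 1 n, f^[k] '' γ ∧
      {C : Set ℂ | ∃ x ∈ γhat \ {O}, C = connectedComponentIn (γhat \ {O}) x}.ncard
        = n :=
  stmt17_general n hn O c hc v hv f hf S r hr hS hsym K hKc hK hOK hvK arc harc harc_uniq harc_refl
    k₀ γ hγ γhat hγhat
end

section
/- Let Z ⊆ S̃ be a subfamily of the augmented system of a G-symmetric P-polygonal system with attractor K, such that Z is a zipper with vertices A = z_0, ..., z_k = B where A, B are vertices of P. Then the attractor K_Z of Z is a subcontinuum of K, and hence a subdendrite of K. -/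
/-!
`K` is invariant under the rotations `f^[l]`: the bounded set `⋃ l, f^[l] '' K` is, by
`G`-symmetry, covered by its images under the system, and a bounded set covered by its images
under uniform contractions lies in every nonempty closed set invariant under them. Every map of
`Z` is a rotation followed by a map of the system, so the same principle gives `K_Z ⊆ K`, and
it also puts the endpoints `z 0` and `z k` into `K_Z`. Hence consecutive pieces `Z i '' K_Z`
and `Z (i + 1) '' K_Z` meet at `z (i + 1)`. An attractor whose pieces form a connected
intersection graph is connected: applying the maps `N` times shows that any two of its points
are joined by a chain of points of the attractor with steps at most `ρ ^ N * diam K_Z`.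
-/

open Complex Real
open Set Function Metric Relation Filter Topology
open scoped NNReal

section Contraction

variable {α ι β : Type*}

theorem mapsTo_of_eq_iUnion_image {S : ι → α → α} {K : Set α} (hK : K = ⋃ i, S i '' K)
    (i : ι) : MapsTo (S i) K K :=
  fun _ hx => hK ▸ mem_iUnion.2 ⟨i, mem_image_of_mem _ hx⟩

variable [PseudoMetricSpace α]

theorem exists_pow_mul_lt {ρ : ℝ≥0} (hρ : ρ < 1) (C : ℝ) {δ : ℝ} (hδ : 0 < δ) :
    ∃ N : ℕ, (ρ : ℝ) ^ N * C < δ := by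
  have hlim : Tendsto (fun N : ℕ => (ρ : ℝ) ^ N * C) atTop (𝓝 0) := by
    simpa using (tendsto_pow_atTop_nhds_zero_of_lt_one ρ.2 (by exact_mod_cast hρ)).mul_const C
  exact (hlim.eventually (gt_mem_nhds hδ)).exists

theorem lipschitzWith_sup_toNNReal [Fintype ι] {S : ι → α → α} {r : ι → ℝ}
    (hS : ∀ i x y, dist (S i x) (S i y) ≤ r i * dist x y) (i : ι) :
    LipschitzWith (Finset.univ.sup fun i => (r i).toNNReal) (S i) := by
  refine LipschitzWith.of_dist_le_mul fun x y => (hS i x y).trans ?_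
  gcongr
  exact (Real.le_coe_toNNReal _).trans <| NNReal.coe_le_coe.2 <|
    Finset.le_sup (f := fun i => (r i).toNNReal) (Finset.mem_univ i)

theorem subset_of_subset_iUnion_image_s18 {T : ι → α → α} {ρ : ℝ≥0} (hρ : ρ < 1)
    (hT : ∀ i, LipschitzWith ρ (T i)) {A B : Set α} (hA : A ⊆ ⋃ i, T i '' A)
    (hAb : Bornology.IsBounded A) (hB : IsClosed B) (hBne : B.Nonempty)
    (hTB : ∀ i, MapsTo (T i) B B) : A ⊆ B := by
  obtain ⟨y, hy⟩ := hBne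
  obtain ⟨C, hC⟩ := hAb.subset_closedBall y
  have approx : ∀ N : ℕ, ∀ a ∈ A, ∃ w ∈ B, dist a w ≤ ρ ^ N * C := by
    intro N
    induction N with
    | zero => exact fun a ha => ⟨y, hy, by simpa using hC ha⟩
    | succ N ih =>
      intro a ha
      obtain ⟨i, b, hb, rfl⟩ := mem_iUnion.1 (hA ha)
      obtain ⟨w, hw, hbw⟩ := ih b hb
      exact ⟨T i w, hTB i hw, by simpa [pow_succ', mul_assoc] using (hT i).dist_le_mul_of_le hbw⟩
  intro a ha
  rw [← hB.closure_eq, Metric.mem_closure_iff]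
  intro δ hδ
  obtain ⟨N, hN⟩ := exists_pow_mul_lt hρ C hδ
  obtain ⟨w, hw, haw⟩ := approx N a ha
  exact ⟨w, hw, haw.trans_lt hN⟩

theorem isBounded_iUnion_image_of_lipschitzWith_one {g : β → α → α} {x₀ : α}
    (hg : ∀ b, LipschitzWith 1 (g b)) (hfix : ∀ b, g b x₀ = x₀) {K : Set α}
    (hK : Bornology.IsBounded K) : Bornology.IsBounded (⋃ b, g b '' K) := by
  obtain ⟨R, hR⟩ := hK.subset_closedBall x₀
  refine (isBounded_closedBall (x := x₀) (r := R)).subset (iUnion_subset fun b => ?_)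
  simpa [hfix b] using ((hg b).mapsTo_closedBall x₀ R).mono_left hR |>.image_subset

theorem mapsTo_of_comp_eq_comp {S : ι → α → α} {g : β → α → α} {ρ : ℝ≥0} (hρ : ρ < 1)
    (hS : ∀ i, LipschitzWith ρ (S i)) {K : Set α} (hK : K = ⋃ i, S i '' K)
    (hKc : IsClosed K) (hKne : K.Nonempty) (hgK : Bornology.IsBounded (⋃ b, g b '' K))
    (hsym : ∀ b i, ∃ b' j, g b ∘ S i = S j ∘ g b') (b : β) : MapsTo (g b) K K := by
  have hcover : ⋃ b, g b '' K ⊆ ⋃ j, S j '' ⋃ b, g b '' K := by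
    intro x hx
    obtain ⟨b, y, hy, rfl⟩ := mem_iUnion.1 hx
    obtain ⟨i, w, hw, rfl⟩ := mem_iUnion.1 (hK.subset hy)
    obtain ⟨b', j, hcomm⟩ := hsym b i
    exact mem_iUnion.2 ⟨j, g b' w, mem_iUnion.2 ⟨b', w, hw, rfl⟩, (congrFun hcomm w).symm⟩
  have hsub := subset_of_subset_iUnion_image_s18 hρ hS hcover hgK hKc hKne
    (mapsTo_of_eq_iUnion_image hK)
  exact fun x hx => hsub (mem_iUnion.2 ⟨b, mem_image_of_mem _ hx⟩)

end Contraction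

section Chains

variable {α ι : Type*} [PseudoMetricSpace α]

def NearIn (X : Set α) (δ : ℝ) (a b : α) : Prop :=
  a ∈ X ∧ b ∈ X ∧ dist a b ≤ δ

theorem isPreconnected_of_forall_reflTransGen_nearIn {X : Set α} (hX : IsCompact X)
    (hchain : ∀ δ > 0, ∀ x ∈ X, ∀ y ∈ X, ReflTransGen (NearIn X δ) x y) :
    IsPreconnected X := by
  rw [isPreconnected_iff_subset_of_disjoint_closed]
  intro u v hu hv hXuv hXuv'
  rcases (X ∩ u).eq_empty_or_nonempty with hXu | ⟨x, hxX, hxu⟩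
  · exact Or.inr fun y hy => (hXuv hy).resolve_left fun hyu => hXu.subset ⟨hy, hyu⟩
  have hsep : X ∩ u ⊆ vᶜ := fun y hy hyv => hXuv'.subset ⟨hy.1, hy.2, hyv⟩
  obtain ⟨δ, hδ, hδv⟩ :=
    (hX.inter_right hu).exists_cthickening_subset_open hv.isOpen_compl hsep
  have hstay : ∀ y, ReflTransGen (NearIn X δ) x y → y ∈ X ∩ u := by
    intro y hxy
    induction hxy with
    | refl => exact ⟨hxX, hxu⟩
    | @tail b c _ hbc ih =>
      obtain ⟨-, hc, hbc⟩ := hbc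
      have hcv : c ∉ v := hδv (mem_cthickening_of_dist_le c b δ _ ih (by rwa [dist_comm]))
      exact ⟨hc, (hXuv hc).resolve_right hcv⟩
  exact Or.inl fun y hy => (hstay y (hchain δ hδ x hxX y hy)).2

theorem reflTransGen_nearIn_pow_mul_diam {Z : ι → α → α} {ρ : ℝ≥0}
    (hZ : ∀ i, LipschitzWith ρ (Z i)) {X : Set α} (hXb : Bornology.IsBounded X)
    (hX : X = ⋃ i, Z i '' X)
    (hlink : ∀ i j, ReflTransGen (fun i j => (Z i '' X ∩ Z j '' X).Nonempty) i j) (N : ℕ) :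
    ∀ x ∈ X, ∀ y ∈ X, ReflTransGen (NearIn X (ρ ^ N * diam X)) x y := by
  induction N with
  | zero => exact fun x hx y hy => .single ⟨hx, hy, by simpa using dist_le_diam_of_mem hXb hx hy⟩
  | succ N ih =>
    have hpiece : ∀ i, ∀ x ∈ X, ∀ y ∈ X,
        ReflTransGen (NearIn X (ρ ^ (N + 1) * diam X)) (Z i x) (Z i y) := by
      refine fun i x hx y hy => (ih x hx y hy).lift (Z i) fun a b ⟨ha, hb, hab⟩ => ?_
      refine ⟨mapsTo_of_eq_iUnion_image hX i ha, mapsTo_of_eq_iUnion_image hX i hb, ?_⟩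
      simpa [pow_succ', mul_assoc] using (hZ i).dist_le_mul_of_le hab
    have hpath : ∀ i j, ReflTransGen (fun i j => (Z i '' X ∩ Z j '' X).Nonempty) i j →
        ∀ x ∈ X, ∀ y ∈ X, ReflTransGen (NearIn X (ρ ^ (N + 1) * diam X)) (Z i x) (Z j y) := by
      intro i j hij
      induction hij with
      | refl => exact hpiece i
      | tail _ hjl ih' =>
        obtain ⟨_, ⟨a, ha, rfl⟩, b, hb, hba⟩ := hjl
        exact fun x hx y hy => (ih' x hx a ha).trans (hba ▸ hpiece _ b hb y hy)
    intro x hx y hy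
    obtain ⟨i, x', hx', rfl⟩ := mem_iUnion.1 (hX.subset hx)
    obtain ⟨j, y', hy', rfl⟩ := mem_iUnion.1 (hX.subset hy)
    exact hpath i j (hlink i j) x' hx' y' hy'

theorem isPreconnected_of_eq_iUnion_image {Z : ι → α → α} {ρ : ℝ≥0} (hρ : ρ < 1)
    (hZ : ∀ i, LipschitzWith ρ (Z i)) {X : Set α} (hX : IsCompact X) (hXeq : X = ⋃ i, Z i '' X)
    (hlink : ∀ i j, ReflTransGen (fun i j => (Z i '' X ∩ Z j '' X).Nonempty) i j) :
    IsPreconnected X := by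
  refine isPreconnected_of_forall_reflTransGen_nearIn hX fun δ hδ x hx y hy => ?_
  obtain ⟨N, hN⟩ := exists_pow_mul_lt hρ (diam X) hδ
  exact ReflTransGen.mono (fun a b ⟨ha, hb, hab⟩ => ⟨ha, hb, hab.trans hN.le⟩) x y
    (reflTransGen_nearIn_pow_mul_diam hZ hX.isBounded hXeq hlink N x hx y hy)

end Chains

section Zipper

variable {α : Type*} {k : ℕ} {Z : Fin k → α → α} {z : ℕ → α} {ε : Fin k → ℕ}

theorem zipper_vertices_mem_image (hε : ∀ i, ε i ≤ 1)
    (hz0 : ∀ i : Fin k, Z i (z 0) = z (i.1 + ε i))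
    (hzk : ∀ i : Fin k, Z i (z k) = z (i.1 + 1 - ε i)) (i : Fin k) :
    z i ∈ Z i '' {z 0, z k} ∧ z (i + 1) ∈ Z i '' {z 0, z k} := by
  rcases Nat.le_one_iff_eq_zero_or_eq_one.1 (hε i) with h | h
  · exact ⟨⟨z 0, by simp, by simpa [h] using hz0 i⟩, ⟨z k, by simp, by simpa [h] using hzk i⟩⟩
  · exact ⟨⟨z k, by simp, by simpa [h] using hzk i⟩, ⟨z 0, by simp, by simpa [h] using hz0 i⟩⟩

theorem zipper_endpoints_subset_iUnion_image (hk : 1 ≤ k) (hε : ∀ i, ε i ≤ 1)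
    (hz0 : ∀ i : Fin k, Z i (z 0) = z (i.1 + ε i))
    (hzk : ∀ i : Fin k, Z i (z k) = z (i.1 + 1 - ε i)) :
    {z 0, z k} ⊆ ⋃ i, Z i '' {z 0, z k} := by
  rintro _ (rfl | rfl)
  · exact mem_iUnion.2 ⟨⟨0, hk⟩, (zipper_vertices_mem_image hε hz0 hzk ⟨0, hk⟩).1⟩
  · refine mem_iUnion.2 ⟨⟨k - 1, by omega⟩, ?_⟩
    simpa [Nat.sub_add_cancel hk] using (zipper_vertices_mem_image hε hz0 hzk ⟨k - 1, by omega⟩).2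

theorem zipper_reflTransGen_image_inter_nonempty (hε : ∀ i, ε i ≤ 1)
    (hz0 : ∀ i : Fin k, Z i (z 0) = z (i.1 + ε i))
    (hzk : ∀ i : Fin k, Z i (z k) = z (i.1 + 1 - ε i)) {T : Set α} (hT : {z 0, z k} ⊆ T)
    (i j : Fin k) : ReflTransGen (fun i j => (Z i '' T ∩ Z j '' T).Nonempty) i j := by
  set R : Fin k → Fin k → Prop := fun i j => (Z i '' T ∩ Z j '' T).Nonempty
  have : Std.Symm R := ⟨fun i j h => by simpa only [R, inter_comm] using h⟩
  have hstep : ∀ l (hl : l + 1 < k), R ⟨l, by omega⟩ ⟨l + 1, hl⟩ := fun l hl =>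
    ⟨z (l + 1), image_mono hT (zipper_vertices_mem_image hε hz0 hzk ⟨l, by omega⟩).2,
      image_mono hT (zipper_vertices_mem_image hε hz0 hzk ⟨l + 1, hl⟩).1⟩
  have hup : ∀ a b (hb : b < k) (hab : a ≤ b), ReflTransGen R ⟨a, by omega⟩ ⟨b, hb⟩ := by
    intro a b
    induction b with
    | zero =>
      intro _ hab
      obtain rfl : a = 0 := by omega
      rfl
    | succ b ih =>
      intro hb hab
      rcases hab.eq_or_lt with rfl | hlt
      · rfl
      · exact (ih (by omega) (by omega)).tail (hstep b hb)
  rcases le_total i j with hij | hji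
  · exact hup i j j.2 hij
  · exact symm_of (ReflTransGen R) (hup j i i.2 hji)

end Zipper

theorem stmt18_general (n : ℕ) (O : ℂ)
    (f : ℂ → ℂ) (hf : ∀ z : ℂ, f z = O + Complex.exp (2 * π * Complex.I / n) * (z - O))
    -- the system of contracting similarities
    {m : ℕ} (S : Fin m → ℂ → ℂ) (r : Fin m → ℝ)
    (hr : ∀ i, r i < 1)
    (hS : ∀ i, ∀ x y : ℂ, dist (S i x) (S i y) = r i * dist x y)
    -- G-symmetry with respect to the rotation group generated by f
    (hsym : ∀ (k : ℕ) (i : Fin m), ∃ (k' : ℕ) (j : Fin m),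
      f^[k] ∘ S i = S j ∘ f^[k'])
    -- the attractor K of S (and of the augmented system S̃)
    (K : Set ℂ) (hKne : K.Nonempty) (hKc : IsCompact K)
    (hK : K = ⋃ i, S i '' K)
    -- the zipper Z, a subfamily of the augmented system S̃
    {k : ℕ} (hk : 1 ≤ k) (Z : Fin k → ℂ → ℂ)
    (hZaug : ∀ i : Fin k, ∃ (i' : Fin m) (l : ℕ), Z i = S i' ∘ f^[l])
    (z : ℕ → ℂ) (ε : Fin k → ℕ) (hε : ∀ i, ε i ≤ 1)
    (hz0 : ∀ i : Fin k, Z i (z 0) = z (i.1 + ε i))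
    (hzm : ∀ i : Fin k, Z i (z k) = z (i.1 + 1 - ε i))
    -- the attractor K_Z of Z
    (KZ : Set ℂ) (hKZne : KZ.Nonempty) (hKZc : IsCompact KZ)
    (hKZ : KZ = ⋃ i, Z i '' KZ) :
    KZ ⊆ K ∧ IsCompact KZ ∧ IsConnected KZ := by
  set ρ : ℝ≥0 := Finset.univ.sup fun i => (r i).toNNReal
  have hρ : ρ < 1 := (Finset.sup_lt_iff zero_lt_one).2 fun i _ => Real.toNNReal_lt_one.2 (hr i)
  have hSρ : ∀ i, LipschitzWith ρ (S i) := lipschitzWith_sup_toNNReal fun i x y => (hS i x y).le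
  have hf1 : LipschitzWith 1 f := LipschitzWith.of_dist_le_mul fun x y => by
    simp [hf, Complex.dist_eq, ← mul_sub, Complex.norm_exp]
  have hfl : ∀ l, LipschitzWith 1 f^[l] := fun l => by simpa using hf1.iterate l
  have hfK : ∀ l, MapsTo f^[l] K K := mapsTo_of_comp_eq_comp hρ hSρ hK hKc.isClosed hKne
    (isBounded_iUnion_image_of_lipschitzWith_one hfl (iterate_fixed (show f O = O by simp [hf]))
      hKc.isBounded) hsym
  have hZρ : ∀ i, LipschitzWith ρ (Z i) := fun i => by
    obtain ⟨i', l, hZi⟩ := hZaug i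
    simpa [hZi] using (hSρ i').comp (hfl l)
  have hZK : ∀ i, MapsTo (Z i) K K := fun i => by
    obtain ⟨i', l, hZi⟩ := hZaug i
    exact hZi ▸ (mapsTo_of_eq_iUnion_image hK i').comp (hfK l)
  have hends : {z 0, z k} ⊆ KZ := subset_of_subset_iUnion_image_s18 hρ hZρ
    (zipper_endpoints_subset_iUnion_image hk hε hz0 hzm) (toFinite _).isBounded hKZc.isClosed
    hKZne (mapsTo_of_eq_iUnion_image hKZ)
  refine ⟨subset_of_subset_iUnion_image_s18 hρ hZρ hKZ.subset hKZc.isBounded hKc.isClosed hKne hZK,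
    hKZc, hKZne, ?_⟩
  exact isPreconnected_of_eq_iUnion_image hρ hZρ hKZc hKZ
    (zipper_reflTransGen_image_inter_nonempty hε hz0 hzm hends)

/-- If `Z ⊆ S̃` is a subfamily of the augmented system of a
`G`-symmetric `P`-polygonal system (`P` a regular `n`-gon, `G` its rotation group,
generated by the rotation `f` by `2π/n` about the center `O`) with attractor `K`,
and `Z` is a zipper whose first and last vertices `z_0`, `z_k` are vertices of `P`,
then the attractor `K_Z` of `Z` is a subcontinuum (hence a subdendrite) of `K`. -/
theorem stmt18 (n : ℕ) (hn : 3 ≤ n) (O c : ℂ) (hc : c ≠ 0)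
    (v : Fin n → ℂ) (hv : ∀ k : Fin n, v k = O + c * Complex.exp (2 * π * Complex.I * k / n))
    (P : Set ℂ) (hP : P = convexHull ℝ (Set.range v))
    (f : ℂ → ℂ) (hf : ∀ z : ℂ, f z = O + Complex.exp (2 * π * Complex.I / n) * (z - O))
    -- the system of contracting similarities
    {m : ℕ} (S : Fin m → ℂ → ℂ) (r : Fin m → ℝ)
    (hr : ∀ i, r i < 1) (hr0 : ∀ i, 0 < r i)
    (hS : ∀ i, ∀ x y : ℂ, dist (S i x) (S i y) = r i * dist x y)
    (hD1 : ∀ i, S i '' P ⊆ P)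
    (hD2 : ∀ i j : Fin m, i ≠ j → S i '' P ∩ S j '' P = ∅ ∨
      ∃ p : ℂ, S i '' P ∩ S j '' P = {p} ∧
        p ∈ S i '' Set.range v ∧ p ∈ S j '' Set.range v)
    (hD3 : ∀ k : Fin n, ∃ i : Fin m, ∃ l : Fin n, S i (v l) = v k)
    (hD4 : ContractibleSpace ↥(⋃ i, S i '' P))
    -- G-symmetry with respect to the rotation group generated by f
    (hsym : ∀ (k : ℕ) (i : Fin m), ∃ (k' : ℕ) (j : Fin m),
      f^[k] ∘ S i = S j ∘ f^[k'])
    -- the attractor K of S (and of the augmented system S̃)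
    (K : Set ℂ) (hKne : K.Nonempty) (hKc : IsCompact K)
    (hK : K = ⋃ i, S i '' K)
    -- the zipper Z, a subfamily of the augmented system S̃
    {k : ℕ} (hk : 1 ≤ k) (Z : Fin k → ℂ → ℂ)
    (hZaug : ∀ i : Fin k, ∃ (i' : Fin m) (l : ℕ), Z i = S i' ∘ f^[l])
    (z : ℕ → ℂ) (ε : Fin k → ℕ) (hε : ∀ i, ε i ≤ 1)
    (hz0 : ∀ i : Fin k, Z i (z 0) = z (i.1 + ε i))
    (hzm : ∀ i : Fin k, Z i (z k) = z (i.1 + 1 - ε i))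
    (hA : ∃ a : Fin n, z 0 = v a) (hB : ∃ b : Fin n, z k = v b)
    -- the attractor K_Z of Z
    (KZ : Set ℂ) (hKZne : KZ.Nonempty) (hKZc : IsCompact KZ)
    (hKZ : KZ = ⋃ i, Z i '' KZ) :
    KZ ⊆ K ∧ IsCompact KZ ∧ IsConnected KZ :=
  stmt18_general n O f hf S r hr hS hsym K hKne hKc hK hk Z hZaug z ε hε hz0 hzm KZ hKZne hKZc hKZ
end
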